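/- arXiv:2208.08522 — 3 statements merged into one kernel-verified Lean document; each statement's English description precedes it below -/
import Mathlib

section
/- Let G be a directed Eulerian graph without parallel edges or self-loops such that the intersection graph G_I of a simple-cycle decomposition of G is a tree. Then for any fixed node r of G, G has a unique arborescence rooted at r directed towards r (i.e., t(G) = 1). -/
/-- The underlying undirected simple graph of a directed graph `E` (no self-loops). -/
def underlyingUG {V : Type*} (E : V → V → Prop) : SimpleGraph V where
  Adj a b := a ≠ b ∧ (E a b ∨ E b a)
  symm := ⟨fun a b h => ⟨h.1.symm, h.2.symm⟩⟩
  loopless := ⟨fun a h => h.1 rfl⟩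

/-- Out-degree of `v`: number of out-neighbors. -/
noncomputable def outdeg {V : Type*} (E : V → V → Prop) (v : V) : ℕ := Set.ncard {w | E v w}

/-- In-degree of `v`: number of in-neighbors. -/
noncomputable def indeg {V : Type*} (E : V → V → Prop) (v : V) : ℕ := Set.ncard {u | E u v}

/-- The cyclic sequence of consecutive pairs of a circuit given as a vertex list. -/
def cyclicPairs {V : Type*} (c : List V) : List (V × V) := c.zip (c.rotate 1)

/-- `c` is an Eulerian circuit: a nonempty closed walk using every edge exactly once. -/
def IsEulerianCircuit {V : Type*} (E : V → V → Prop) (c : List V) : Prop :=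
  c ≠ [] ∧ (cyclicPairs c).Nodup ∧ ∀ p : V × V, p ∈ cyclicPairs c ↔ E p.1 p.2

/-- The walk `q` appears (cyclically, as consecutive edges) in the circuit `c`. -/
def Appears {V : Type*} (q c : List V) : Prop :=
  ∃ k, (q.zip q.tail) <:+: cyclicPairs (c.rotate k)

/-- `v` is a cut node of the connected undirected graph `H`. -/
def IsCutNode {V : Type*} (H : SimpleGraph V) (v : V) : Prop :=
  ¬ (H.induce {u | u ≠ v}).Connected

/-- The underlying undirected graph with node `v` (and incident edges) removed. -/
def delNode {V : Type*} (E : V → V → Prop) (v : V) := (underlyingUG E).induce {u | u ≠ v}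

/-- `T` is an arborescence of `E` rooted at `r` and directed towards `r`:
every node other than `r` has out-degree exactly one in `T`, `r` has out-degree zero,
and every node reaches `r` by a directed path in `T`. -/
def IsArborescenceTowards {V : Type*} (E : V → V → Prop) (r : V) (T : Set (V × V)) : Prop :=
  (∀ p ∈ T, E p.1 p.2) ∧ (∀ x : V, x ≠ r → ∃! y : V, (x, y) ∈ T) ∧
  (∀ y : V, (r, y) ∉ T) ∧ ∀ x : V, Relation.ReflTransGen (fun a b => (a, b) ∈ T) x r

/-- The intersection graph of a simple-cycle decomposition `c`. -/
def intersectionGraph {V : Type*} {m : ℕ} (c : Fin m → List V) : SimpleGraph (Fin m) where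
  Adj i j := i ≠ j ∧ ∃ x : V, x ∈ c i ∧ x ∈ c j
  symm := ⟨fun i j h => ⟨h.1.symm, h.2.imp fun _ hx => hx.symm⟩⟩
  loopless := ⟨fun i h => h.1 rfl⟩

/-!
Root the intersection tree at a cycle `i₀` through `r`. Two cycles through a common node are
adjacent in the tree, so their depths differ by one; hence every node `v` has a unique cycle
through it of least depth, its home cycle. A cycle `i ≠ i₀` meets its parent cycle in a single
node, its gate, and every other node of `c i` has `c i` as home cycle.

Letting every node `v ≠ r` leave along its home cycle gives an arborescence: from `v` the home
cycle leads to its gate (or to `r`), which lies on a shallower cycle. Conversely, let `T` be any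
arborescence and suppose some edge of `T` leaves its tail along a cycle other than the tail's
home cycle; take such a cycle `c j` of greatest depth. Its tail is then the gate of `c j`, and no
edge of `T` leaves the node set of `c j`, which does not contain `r`: a contradiction.
-/

open Relation SimpleGraph

namespace List
variable {α β : Type*}

theorem Nodup.eq_of_mem_zip {l₁ : List α} (h : l₁.Nodup) {l₂ : List β} {a : α} {b b' : β}
    (hb : (a, b) ∈ zip l₁ l₂) (hb' : (a, b') ∈ zip l₁ l₂) : b = b' := by
  induction l₁ generalizing l₂ with
  | nil => simp at hb
  | cons x xs ih =>
    cases l₂ with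
    | nil => simp at hb
    | cons y ys =>
      rw [nodup_cons] at h
      simp only [zip_cons_cons, mem_cons, Prod.mk.injEq] at hb hb'
      rcases hb with ⟨rfl, rfl⟩ | hb <;> rcases hb' with ⟨hax, rfl⟩ | hb'
      · rfl
      · exact absurd (of_mem_zip hb').1 h.1
      · exact absurd (hax ▸ (of_mem_zip hb).1) h.1
      · exact ih h.2 hb hb'

theorem mem_zip_append_right {l₁ : List α} {l₂ l₃ : List β} {p : α × β}
    (hp : p ∈ zip l₁ l₂) : p ∈ zip l₁ (l₂ ++ l₃) := by
  induction l₁ generalizing l₂ with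
  | nil => simp at hp
  | cons x xs ih =>
    cases l₂ with
    | nil => simp at hp
    | cons y ys =>
      simp only [zip_cons_cons, mem_cons, cons_append] at hp ⊢
      exact hp.imp_right ih

theorem reflTransGen_of_mem_cons (a : α) (l : List α) {b : α} (hb : b ∈ a :: l) :
    ReflTransGen (fun x y => (x, y) ∈ zip (a :: l) l ∧ x ≠ b) a b := by
  induction l generalizing a with
  | nil => rw [mem_singleton.1 hb]
  | cons a' l ih =>
    obtain rfl | hab := eq_or_ne b a
    · exact .refl
    refine .head ⟨by simp, hab.symm⟩ <|
      ReflTransGen.mono (fun x y hxy => ⟨mem_cons_of_mem _ hxy.1, hxy.2⟩) _ _ <|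
        ih a' (mem_of_ne_of_mem hab hb)

end List

section CyclicPairs
variable {α : Type*} {l : List α}

theorem mem_of_mem_cyclicPairs {p : α × α} (hp : p ∈ cyclicPairs l) :
    p.1 ∈ l ∧ p.2 ∈ l :=
  (List.of_mem_zip hp).imp_right List.mem_rotate.1

theorem mem_cyclicPairs_rotate {p : α × α} (n : ℕ) :
    p ∈ cyclicPairs (l.rotate n) ↔ p ∈ cyclicPairs l := by
  rw [cyclicPairs, List.rotate_rotate, add_comm, ← List.rotate_rotate, List.zip,
    ← List.zipWith_rotate_distrib _ _ _ _ (by simp), ← List.zip, List.mem_rotate, cyclicPairs]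

theorem mem_cyclicPairs_append_comm {s t : List α} {p : α × α} :
    p ∈ cyclicPairs (s ++ t) ↔ p ∈ cyclicPairs (t ++ s) := by
  rw [← mem_cyclicPairs_rotate s.length, List.rotate_append_length_eq]

theorem exists_mem_cyclicPairs {a : α} (ha : a ∈ l) : ∃ b, (a, b) ∈ cyclicPairs l := by
  obtain ⟨s, t, rfl⟩ := List.append_of_mem ha
  simp_rw [mem_cyclicPairs_append_comm (s := s), List.cons_append]
  generalize t ++ s = u
  cases u <;> simp [cyclicPairs, List.rotate_cons_succ]

theorem List.Nodup.eq_of_mem_cyclicPairs (hl : l.Nodup) {a b b' : α}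
    (hb : (a, b) ∈ cyclicPairs l) (hb' : (a, b') ∈ cyclicPairs l) : b = b' :=
  hl.eq_of_mem_zip hb hb'

theorem reflTransGen_cyclicPairs {a b : α} (ha : a ∈ l) (hb : b ∈ l) :
    ReflTransGen (fun x y => (x, y) ∈ cyclicPairs l ∧ x ≠ b) a b := by
  obtain ⟨s, t, rfl⟩ := List.append_of_mem ha
  have hb' : b ∈ a :: (t ++ s) := by simpa [or_comm, or_left_comm] using hb
  refine ReflTransGen.mono (fun x y hxy => ⟨?_, hxy.2⟩) _ _
    (List.reflTransGen_of_mem_cons a _ hb')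
  rw [mem_cyclicPairs_append_comm, List.cons_append, cyclicPairs, List.rotate_cons_succ,
    List.rotate_zero]
  exact List.mem_zip_append_right hxy.1

end CyclicPairs

namespace SimpleGraph
variable {W : Type*} {H : SimpleGraph W}

theorem Connected.exists_adj_dist_add_one_eq (hH : H.Connected) (u : W) {v : W} (hv : v ≠ u) :
    ∃ w, H.Adj v w ∧ H.dist u w + 1 = H.dist u v := by
  obtain ⟨p, -, hp⟩ := hH.exists_path_of_dist v u
  cases p with
  | nil => exact absurd rfl hv
  | @cons _ w _ h q =>
    obtain ⟨q', hq'⟩ := hH.exists_walk_length_eq_dist w u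
    have hle := dist_le (Walk.cons h q')
    have hge := dist_le q
    simp only [Walk.length_cons] at hp hle
    refine ⟨w, h, ?_⟩
    rw [dist_comm, dist_comm (u := u)]
    omega

theorem IsTree.eq_of_adj_of_dist_add_one_eq (hH : H.IsTree) (u : W) {v w w' : W}
    (hw : H.Adj v w) (hw' : H.Adj v w') (hd : H.dist u w + 1 = H.dist u v)
    (hd' : H.dist u w' + 1 = H.dist u v) : w = w' := by
  classical
  have hpath : ∀ x, H.Adj v x → H.dist u x + 1 = H.dist u v →
      ∃ p : H.Walk v u, p.IsPath ∧ p.getVert 1 = x := by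
    intro x hx hdx
    obtain ⟨q, hq, hql⟩ := hH.connected.exists_path_of_dist x u
    have hv : v ∉ q.support := fun hv => by
      have hshort := q.length_dropUntil_le_length hv
      have hlong := dist_le (q.dropUntil v hv)
      rw [dist_comm] at hql hlong
      omega
    exact ⟨.cons hx q, hq.cons hv, by simp⟩
  obtain ⟨p, hp, rfl⟩ := hpath w hw hd
  obtain ⟨p', hp', rfl⟩ := hpath w' hw' hd'
  rw [(hH.existsUnique_path v u).unique hp hp']

end SimpleGraph

theorem IsArborescenceTowards.eq_of_subset {V : Type*} {E : V → V → Prop} {r : V}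
    {T T' : Set (V × V)} (hT : IsArborescenceTowards E r T)
    (hT' : IsArborescenceTowards E r T') (h : T ⊆ T') : T = T' := by
  refine h.antisymm fun ⟨x, y⟩ hxy => ?_
  have hxr : x ≠ r := fun hxr => hT'.2.2.1 y (hxr ▸ hxy)
  obtain ⟨y', hy', -⟩ := hT.2.1 x hxr
  rwa [(hT'.2.1 x hxr).unique hxy (h hy')]

theorem exists_mem_of_connected {V : Type*} {E : V → V → Prop} {m : ℕ} {c : Fin m → List V}
    (hconn : (underlyingUG E).Connected)
    (hpart : ∀ p : V × V, E p.1 p.2 → ∃ i, p ∈ cyclicPairs (c i))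
    {a : V} {i : Fin m} (ha : a ∈ c i) (v : V) : ∃ j, v ∈ c j := by
  obtain ⟨p⟩ := hconn.preconnected v a
  cases p with
  | nil => exact ⟨i, ha⟩
  | cons h _ =>
    rcases h.2 with h | h
    · exact (hpart (_, _) h).imp fun _ hj => (mem_of_mem_cyclicPairs hj).1
    · exact (hpart (_, _) h).imp fun _ hj => (mem_of_mem_cyclicPairs hj).2

section IntersectionTree
variable {V : Type*} {m : ℕ} {c : Fin m → List V} {i₀ : Fin m}

local notation "depth" => SimpleGraph.dist (intersectionGraph c) i₀

def IsHomeCycle (c : Fin m → List V) (i₀ : Fin m) (v : V) (i : Fin m) : Prop :=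
  v ∈ c i ∧ ∀ j, v ∈ c j → j ≠ i →
    (intersectionGraph c).dist i₀ i < (intersectionGraph c).dist i₀ j

theorem IsHomeCycle.dist_le {v : V} {i j : Fin m} (h : IsHomeCycle c i₀ v i) (hj : v ∈ c j) :
    depth i ≤ depth j := by
  obtain rfl | hji := eq_or_ne j i
  · exact le_rfl
  · exact (h.2 j hj hji).le

theorem IsHomeCycle.unique {v : V} {i j : Fin m} (hi : IsHomeCycle c i₀ v i)
    (hj : IsHomeCycle c i₀ v j) : i = j :=
  by_contra fun hij => (hj.2 i hi.1 hij).not_ge (hi.dist_le hj.1)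

theorem exists_isHomeCycle (htree : (intersectionGraph c).IsTree) {v : V} (hv : ∃ i, v ∈ c i) :
    ∃ i, IsHomeCycle c i₀ v i := by
  obtain ⟨i, hi, hmin⟩ := Set.exists_min_image {i | v ∈ c i} depth (Set.toFinite _) hv
  refine ⟨i, hi, fun j hj hji => ?_⟩
  have hadj : (intersectionGraph c).Adj i j := ⟨hji.symm, v, hi, hj⟩
  have := htree.dist_eq_dist_add_one_of_adj i₀ hadj
  have := hmin j hj
  omega

theorem eq_of_mem_of_mem_of_dist_lt (htree : (intersectionGraph c).IsTree)
    (hshare : ∀ i j : Fin m, i ≠ j → ∀ x y : V,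
      x ∈ c i → x ∈ c j → y ∈ c i → y ∈ c j → x = y)
    {i p j : Fin m} {g x : V} (hp : (intersectionGraph c).Adj i p) (hdp : depth p + 1 = depth i)
    (hgi : g ∈ c i) (hgp : g ∈ c p) (hxi : x ∈ c i) (hxj : x ∈ c j)
    (hdj : depth j < depth i) :
    x = g := by
  have hadj : (intersectionGraph c).Adj i j := ⟨by rintro rfl; omega, x, hxi, hxj⟩
  have hdj' : depth j + 1 = depth i := by
    rcases htree.dist_eq_dist_add_one_of_adj i₀ hadj with h | h <;> omega
  obtain rfl := htree.eq_of_adj_of_dist_add_one_eq i₀ hadj hp hdj' hdp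
  exact hshare i j hadj.1 x g hxi hxj hgi hgp

/-- The witness `e` is `r` on the root cycle and the gate of `c i` on any other cycle. -/
theorem exists_exit (htree : (intersectionGraph c).IsTree)
    (hshare : ∀ i j : Fin m, i ≠ j → ∀ x y : V,
      x ∈ c i → x ∈ c j → y ∈ c i → y ∈ c j → x = y)
    {r : V} (hr : r ∈ c i₀) (i : Fin m) :
    ∃ e ∈ c i, (∀ x ∈ c i, x ≠ e → IsHomeCycle c i₀ x i ∧ x ≠ r) ∧
      (e = r ∨ ∃ j, e ∈ c j ∧ depth j < depth i) := by
  obtain rfl | hi := eq_or_ne i i₀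
  · refine ⟨r, hr, fun x hx hxr => ⟨⟨hx, fun j _ hj => ?_⟩, hxr⟩, .inl rfl⟩
    simpa using htree.connected.pos_dist_of_ne hj.symm
  obtain ⟨p, hp, hdp⟩ := htree.connected.exists_adj_dist_add_one_eq i₀ hi
  obtain ⟨g, hgi, hgp⟩ := hp.2
  have hgate {j : Fin m} {x : V} := eq_of_mem_of_mem_of_dist_lt (j := j) (x := x)
    htree hshare hp hdp hgi hgp
  refine ⟨g, hgi, fun x hx hxg => ⟨⟨hx, fun j hj hji => ?_⟩, ?_⟩,
    .inr ⟨p, hgp, by omega⟩⟩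
  · have hadj : (intersectionGraph c).Adj i j := ⟨hji.symm, x, hx, hj⟩
    rcases htree.dist_eq_dist_add_one_of_adj i₀ hadj with h | h
    · exact absurd (hgate hx hj (by omega)) hxg
    · omega
  · rintro rfl
    exact hxg (hgate hx hr (by simpa using htree.connected.pos_dist_of_ne hi.symm))

def homeEdges (c : Fin m → List V) (home : V → Fin m) (r : V) : Set (V × V) :=
  {p | p.1 ≠ r ∧ p ∈ cyclicPairs (c (home p.1))}

theorem isArborescenceTowards_homeEdges {E : V → V → Prop}
    (hedge : ∀ i, ∀ p ∈ cyclicPairs (c i), E p.1 p.2) (hnodup : ∀ i, (c i).Nodup)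
    (htree : (intersectionGraph c).IsTree)
    (hshare : ∀ i j : Fin m, i ≠ j → ∀ x y : V,
      x ∈ c i → x ∈ c j → y ∈ c i → y ∈ c j → x = y)
    {home : V → Fin m} (hhome : ∀ v, IsHomeCycle c i₀ v (home v))
    {r : V} (hr : r ∈ c i₀) :
    IsArborescenceTowards E r (homeEdges c home r) := by
  refine ⟨fun p hp => hedge _ p hp.2, fun x hx => ?_, fun y hy => hy.1 rfl, fun v => ?_⟩
  · obtain ⟨y, hy⟩ := exists_mem_cyclicPairs (hhome x).1
    exact ⟨y, ⟨hx, hy⟩, fun y' hy' => (hnodup _).eq_of_mem_cyclicPairs hy'.2 hy⟩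
  induction hd : depth (home v) using Nat.strong_induction_on generalizing v with
  | _ n ih =>
    obtain ⟨e, he, hexit, hnext⟩ := exists_exit htree hshare hr (home v)
    have hwalk : ReflTransGen (fun a b => (a, b) ∈ homeEdges c home r) v e := by
      refine ReflTransGen.mono (fun x y ⟨hxy, hxe⟩ => ?_) _ _
        (reflTransGen_cyclicPairs (hhome v).1 he)
      obtain ⟨hxhome, hxr⟩ := hexit x (mem_of_mem_cyclicPairs hxy).1 hxe
      exact ⟨hxr, by rwa [(hhome x).unique hxhome]⟩
    rcases hnext with rfl | ⟨j, hej, hj⟩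
    · exact hwalk
    · exact hwalk.trans (ih _ (hd ▸ ((hhome e).dist_le hej).trans_lt hj) e rfl)

theorem subset_homeEdges {E : V → V → Prop}
    (hpart : ∀ p : V × V, E p.1 p.2 → ∃ i, p ∈ cyclicPairs (c i))
    (htree : (intersectionGraph c).IsTree)
    (hshare : ∀ i j : Fin m, i ≠ j → ∀ x y : V,
      x ∈ c i → x ∈ c j → y ∈ c i → y ∈ c j → x = y)
    {home : V → Fin m} (hhome : ∀ v, IsHomeCycle c i₀ v (home v))
    {r : V} (hr : r ∈ c i₀)
    {T : Set (V × V)} (hT : IsArborescenceTowards E r T) : T ⊆ homeEdges c home r := by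
  obtain ⟨hTE, hTuniq, hTroot, hTreach⟩ := hT
  suffices hhomeEdge : ∀ x y, (x, y) ∈ T → (x, y) ∈ cyclicPairs (c (home x)) from
    fun ⟨x, y⟩ hxy => ⟨fun hxr => hTroot y (hxr ▸ hxy), hhomeEdge x y hxy⟩
  by_contra! hbad
  set B := {k | ∃ x y, (x, y) ∈ T ∧ (x, y) ∈ cyclicPairs (c k) ∧ k ≠ home x}
  have hB : B.Nonempty := by
    obtain ⟨x, y, hxy, hnot⟩ := hbad
    obtain ⟨k, hk⟩ := hpart _ (hTE _ hxy)
    exact ⟨k, x, y, hxy, hk, by rintro rfl; exact hnot hk⟩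
  obtain ⟨j, ⟨x, y, hxy, hj, hjx⟩, hmax⟩ := Set.exists_max_image B depth (Set.toFinite B) hB
  obtain ⟨e, -, hexit, -⟩ := exists_exit htree hshare hr j
  have hxj := (mem_of_mem_cyclicPairs hj).1
  have hxe : x = e := by_contra fun hxe => hjx ((hexit x hxj hxe).1.unique (hhome x))
  have hxr : x ≠ r := fun h => hTroot y (h ▸ hxy)
  have hrj : r ∉ c j := fun hrj => (hexit r hrj (hxe ▸ hxr.symm)).2 rfl
  have hclosed : ∀ w z, (w, z) ∈ T → w ∈ c j → z ∈ c j := by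
    intro w z hwz hw
    obtain ⟨k, hk⟩ := hpart _ (hTE _ hwz)
    obtain rfl | hkj := eq_or_ne k j
    · exact (mem_of_mem_cyclicPairs hk).2
    obtain rfl | hwe := eq_or_ne w e
    · rw [(hTuniq w (hxe ▸ hxr)).unique hwz (hxe ▸ hxy)]
      exact (mem_of_mem_cyclicPairs hj).2
    have hwj := (hexit w hw hwe).1
    have hlt := hwj.2 k (mem_of_mem_cyclicPairs hk).1 hkj
    have := hmax k ⟨w, z, hwz, hk, fun hkw => hkj (hkw ▸ (hhome w).unique hwj)⟩
    omega
  have hstay (b : V) (hb : ReflTransGen (fun a b => (a, b) ∈ T) x b) : b ∈ c j := by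
    induction hb with
    | refl => exact hxj
    | tail _ hab ih => exact hclosed _ _ hab ih
  exact hrj (hstay r (hTreach x))

end IntersectionTree

theorem tree_intersection_unique_arborescence_general {V : Type*} (E : V → V → Prop)
    (hconn : (underlyingUG E).Connected)
    (m : ℕ) (c : Fin m → List V)
    (hcyc : ∀ i : Fin m, c i ≠ [] ∧ (c i).Nodup ∧ ∀ p ∈ cyclicPairs (c i), E p.1 p.2)
    (hpart : ∀ p : V × V, E p.1 p.2 → ∃! i : Fin m, p ∈ cyclicPairs (c i))
    (hshare : ∀ i j : Fin m, i ≠ j → ∀ x y : V,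
      x ∈ c i → x ∈ c j → y ∈ c i → y ∈ c j → x = y)
    (htree : (intersectionGraph c).IsTree) :
    ∀ r : V, ∃! T : Set (V × V), IsArborescenceTowards E r T := by
  intro r
  have hpart' (p : V × V) (hp : E p.1 p.2) : ∃ i, p ∈ cyclicPairs (c i) := (hpart p hp).exists
  obtain ⟨i₁⟩ := htree.connected.nonempty
  obtain ⟨a, ha⟩ := List.exists_mem_of_ne_nil _ (hcyc i₁).1
  have hcover := exists_mem_of_connected hconn hpart' ha
  obtain ⟨i₀, hr⟩ := hcover r
  choose home hhome using fun v => exists_isHomeCycle (i₀ := i₀) htree (hcover v)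
  have hT := isArborescenceTowards_homeEdges (fun i => (hcyc i).2.2) (fun i => (hcyc i).2.1)
    htree hshare hhome hr
  exact ⟨_, hT, fun T hT' =>
    hT'.eq_of_subset hT (subset_homeEdges hpart' htree hshare hhome hr hT')⟩

/-- If the intersection graph of a simple-cycle decomposition of `G` is a tree (in
particular, any two cycles share at most one node), then for every node `r`, `G` has a
unique arborescence rooted at `r` and directed towards `r`. -/
theorem tree_intersection_unique_arborescence {V : Type*} [Fintype V] (E : V → V → Prop)
    (hloop : ∀ x : V, ¬ E x x) (hconn : (underlyingUG E).Connected)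
    (heul : ∃ c : List V, IsEulerianCircuit E c)
    (m : ℕ) (c : Fin m → List V)
    (hcyc : ∀ i : Fin m, c i ≠ [] ∧ (c i).Nodup ∧ ∀ p ∈ cyclicPairs (c i), E p.1 p.2)
    (hpart : ∀ p : V × V, E p.1 p.2 → ∃! i : Fin m, p ∈ cyclicPairs (c i))
    (hshare : ∀ i j : Fin m, i ≠ j → ∀ x y : V,
      x ∈ c i → x ∈ c j → y ∈ c i → y ∈ c j → x = y)
    (htree : (intersectionGraph c).IsTree) :
    ∀ r : V, ∃! T : Set (V × V), IsArborescenceTowards E r T :=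
  tree_intersection_unique_arborescence_general E hconn m c hcyc hpart hshare htree
end

section
/- Let G be a directed Eulerian graph without parallel edges or self-loops in which every node v satisfies d(v) = 1, or d(v) = 2 and v is a cut node of U(G). Then the number of Eulerian circuits of G (counted up to cyclic rotation) equals 1; in particular, via the BEST theorem formula ε(G) = t(G) · ∏_v (d(v) − 1)!, one has t(G) = 1 and (d(v) − 1)! = 1 for all v. -/
/-- `v ∈ A(G)`: `d(v) = 1`, or `d(v) = 2` and `v` is a cut node of `U(G)`. -/
def inA {V : Type*} (E : V → V → Prop) (v : V) : Prop :=
  outdeg E v = 1 ∨ (outdeg E v = 2 ∧ IsCutNode (underlyingUG E) v)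

/-!
Unroll an Eulerian circuit into an `n`-periodic vertex sequence. Every vertex `w ≠ v` is joined
in `U(G) - v` to the out-neighbour of `v` through which the circuit last left `v` before reaching
`w`. So if `v` has out-degree 2 and is a cut node, its two out-neighbours lie in different
components of `U(G) - v`, and the circuit, entering `v` from `u`, must leave it towards the
out-neighbour not joined to `u`: the segment after the other visit of `v` joins the other
out-neighbour to `u`. Hence an Eulerian circuit is determined by any one of its edges. Likewise
the tree edge `(x, y)` of an arborescence towards `r` has `y` joined to `r` avoiding `x`, which
fixes `y` among the out-neighbours of `x`; the last-exit tree of the circuit shows one exists.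
-/

open Function

theorem Set.eq_or_eq_of_ncard_eq_two {α : Type*} {s : Set α} (hs : s.ncard = 2) {a b x : α}
    (ha : a ∈ s) (hb : b ∈ s) (hab : a ≠ b) (hx : x ∈ s) : x = a ∨ x = b := by
  obtain ⟨p, q, -, rfl⟩ := Set.ncard_eq_two.mp hs
  simp only [Set.mem_insert_iff, Set.mem_singleton_iff] at ha hb hx
  grind

theorem Nat.exists_modEq_mem_Ico {n : ℕ} (hn : 0 < n) (a q : ℕ) :
    ∃ q', q' ≡ q [MOD n] ∧ a ≤ q' ∧ q' < a + n := by
  refine ⟨a + (q + (n - a % n)) % n, ?_, Nat.le_add_right _ _,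
    Nat.add_lt_add_left (Nat.mod_lt _ hn) a⟩
  have hsplit : a + (q + (n - a % n)) = q + n * (a / n + 1) := by
    have hdiv := Nat.mod_add_div a n
    have hmod := (Nat.mod_lt a hn).le
    rw [Nat.mul_succ]
    omega
  calc a + (q + (n - a % n)) % n ≡ a + (q + (n - a % n)) [MOD n] :=
        Nat.ModEq.add_left a (Nat.mod_modEq _ n)
    _ = q + n * (a / n + 1) := hsplit
    _ ≡ q [MOD n] := by simp [Nat.ModEq]

theorem Function.Periodic.nat_apply_eq_of_modEq {α : Type*} {f : ℕ → α} {n i j : ℕ}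
    (hf : Periodic f n) (h : i ≡ j [MOD n]) : f i = f j := by
  rw [← hf.map_mod_nat i, h, hf.map_mod_nat]

theorem SimpleGraph.Walk.reachable_induce_ne {V : Type*} {G : SimpleGraph V} {v a b : V}
    (p : (G.deleteIncidenceSet v).Walk a b) (ha : a ≠ v) (hb : b ≠ v) :
    (G.induce {u | u ≠ v}).Reachable ⟨a, ha⟩ ⟨b, hb⟩ := by
  induction p with
  | nil => rfl
  | cons hadj _ ih =>
    obtain ⟨hadj, -, hc⟩ := SimpleGraph.deleteIncidenceSet_adj.mp hadj
    have hadj' : (G.induce {u | u ≠ v}).Adj ⟨_, ha⟩ ⟨_, hc⟩ := hadj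
    exact hadj'.reachable.trans (ih hc hb)

theorem SimpleGraph.connected_induce_ne_of_reachable {V : Type*} {G : SimpleGraph V} {v y : V}
    (hy : y ≠ v) (h : ∀ w, w ≠ v → (G.deleteIncidenceSet v).Reachable w y) :
    (G.induce {u | u ≠ v}).Connected := by
  refine (SimpleGraph.connected_iff_exists_forall_reachable _).mpr ⟨⟨y, hy⟩, ?_⟩
  rintro ⟨w, hw⟩
  obtain ⟨p⟩ := (h w hw).symm
  exact p.reachable_induce_ne hy hw

section Digraph

variable {V : Type*} {E : V → V → Prop}

theorem eq_of_outdeg_eq_one {v y y' : V} (hv : outdeg E v = 1) (hy : E v y) (hy' : E v y') :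
    y = y' := by
  obtain ⟨a, ha⟩ := Set.ncard_eq_one.mp hv
  have hy : y ∈ ({a} : Set V) := ha ▸ hy
  have hy' : y' ∈ ({a} : Set V) := ha ▸ hy'
  rw [Set.mem_singleton_iff] at hy hy'
  rw [hy, hy']

theorem exists_adj_ne_of_outdeg_eq_two {v : V} (hv : outdeg E v = 2) (z : V) :
    ∃ y, E v y ∧ y ≠ z :=
  Set.exists_ne_of_one_lt_ncard (s := {w | E v w}) (by rw [← outdeg, hv]; exact one_lt_two) z

theorem inA.exists_adj {v : V} (hv : inA E v) : ∃ w, E v w := by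
  refine Set.nonempty_of_ncard_ne_zero (s := {w | E v w}) ?_
  rcases hv with h | ⟨h, -⟩ <;> rw [← outdeg, h] <;> decide

theorem inA.factorial_outdeg_sub_one {v : V} (hv : inA E v) :
    (outdeg E v - 1).factorial = 1 := by
  rcases hv with h | ⟨h, -⟩ <;> rw [h] <;> rfl

theorem deleteIncidenceSet_adj_of_edge (hloop : ∀ x, ¬ E x x) {v a b : V} (h : E a b)
    (ha : a ≠ v) (hb : b ≠ v) : ((underlyingUG E).deleteIncidenceSet v).Adj a b :=
  SimpleGraph.deleteIncidenceSet_adj.mpr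
    ⟨⟨fun hab => hloop a (hab ▸ h), Or.inl h⟩, ha, hb⟩

end Digraph

/-- An Eulerian circuit of length `n`, unrolled into an `n`-periodic sequence of vertices. -/
structure IsEulerTour {V : Type*} (E : V → V → Prop) (n : ℕ) (f : ℕ → V) : Prop where
  pos : 0 < n
  periodic : Periodic f n
  adj : ∀ i, E (f i) (f (i + 1))
  exists_of_adj : ∀ {a b}, E a b → ∃ i, f i = a ∧ f (i + 1) = b
  modEq_of_eq : ∀ {i j}, f i = f j → f (i + 1) = f (j + 1) → i ≡ j [MOD n]

namespace IsEulerTour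

variable {V : Type*} {E : V → V → Prop} {n m : ℕ} {f g : ℕ → V}

theorem shift (hf : IsEulerTour E n f) (k : ℕ) : IsEulerTour E n (fun t => f (t + k)) where
  pos := hf.pos
  periodic t := by simp only [Nat.add_right_comm t n k, hf.periodic (t + k)]
  adj t := by simpa only [Nat.add_right_comm t 1 k] using hf.adj (t + k)
  exists_of_adj hab := by
    obtain ⟨i, hi, hi'⟩ := hf.exists_of_adj hab
    obtain ⟨j, hj, hkj, -⟩ := Nat.exists_modEq_mem_Ico hf.pos k i
    refine ⟨j - k, ?_⟩
    rw [Nat.sub_add_cancel hkj, show j - k + 1 + k = j + 1 by omega,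
      hf.periodic.nat_apply_eq_of_modEq hj, hf.periodic.nat_apply_eq_of_modEq (hj.add_right 1)]
    exact ⟨hi, hi'⟩
  modEq_of_eq h h' := by
    refine Nat.ModEq.add_right_cancel' k (hf.modEq_of_eq h ?_)
    simpa only [Nat.add_right_comm _ 1 k] using h'

section

variable (hf : IsEulerTour E n f) (hloop : ∀ x, ¬ E x x)
include hf

theorem surjective (h : ∀ v, ∃ w, E v w) : Surjective f := fun v => by
  obtain ⟨w, hw⟩ := h v
  obtain ⟨i, hi, -⟩ := hf.exists_of_adj hw
  exact ⟨i, hi⟩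

theorem exists_visit_mem_Ico (hsurj : Surjective f) (a : ℕ) (w : V) :
    ∃ j, a ≤ j ∧ j < a + n ∧ f j = w := by
  obtain ⟨i, rfl⟩ := hsurj w
  obtain ⟨j, hj, hj'⟩ := Nat.exists_modEq_mem_Ico hf.pos a i
  exact ⟨j, hj'.1, hj'.2, hf.periodic.nat_apply_eq_of_modEq hj⟩

theorem surjective_shift (hsurj : Surjective f) (k : ℕ) : Surjective (fun t => f (t + k)) := by
  intro w
  obtain ⟨j, hj, -, rfl⟩ := hf.exists_visit_mem_Ico hsurj k w
  exact ⟨j - k, by simp only [Nat.sub_add_cancel hj]⟩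

include hloop

theorem exists_last_visit {v : V} {a : ℕ} (ha : f a = v) :
    ∀ m, f (a + m) ≠ v → ∃ p, a ≤ p ∧ p < a + m ∧ f p = v ∧
      ((underlyingUG E).deleteIncidenceSet v).Reachable (f (p + 1)) (f (a + m))
  | 0, h => absurd ha h
  | m + 1, h => by
    by_cases hm : f (a + m) = v
    · exact ⟨a + m, by omega, by omega, hm, .rfl⟩
    · obtain ⟨p, hp, hp', hpv, hreach⟩ := exists_last_visit ha m hm
      refine ⟨p, hp, by omega, hpv, hreach.trans ?_⟩
      exact (deleteIncidenceSet_adj_of_edge hloop (hf.adj (a + m)) hm h).reachable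

theorem exists_adj_reachable (hsurj : Surjective f) {v w : V} (hw : w ≠ v) :
    ∃ y, E v y ∧ ((underlyingUG E).deleteIncidenceSet v).Reachable y w := by
  obtain ⟨a, rfl⟩ := hsurj v
  obtain ⟨j, hj, -, rfl⟩ := hf.exists_visit_mem_Ico hsurj a w
  obtain ⟨p, -, -, hp, hreach⟩ :=
    hf.exists_last_visit hloop rfl (j - a) (by rwa [Nat.add_sub_cancel' hj])
  rw [Nat.add_sub_cancel' hj] at hreach
  exact ⟨f (p + 1), hp ▸ hf.adj p, hreach⟩

theorem not_reachable_of_isCutNode (hsurj : Surjective f) {v y₁ y₂ : V}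
    (hv : outdeg E v = 2) (hcut : IsCutNode (underlyingUG E) v)
    (h₁ : E v y₁) (h₂ : E v y₂) (hne : y₁ ≠ y₂) :
    ¬ ((underlyingUG E).deleteIncidenceSet v).Reachable y₁ y₂ := by
  intro h₁₂
  have hy₁ : y₁ ≠ v := by rintro rfl; exact hloop _ h₁
  refine hcut (SimpleGraph.connected_induce_ne_of_reachable hy₁ ?_)
  intro w hw
  obtain ⟨y, hy, hyw⟩ := hf.exists_adj_reachable hloop hsurj hw
  rcases Set.eq_or_eq_of_ncard_eq_two hv h₁ h₂ hne hy with rfl | rfl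
  · exact hyw.symm
  · exact hyw.symm.trans h₁₂.symm

theorem not_reachable_pred_succ (hsurj : Surjective f) (i : ℕ) (hv : outdeg E (f (i + 1)) = 2)
    (hcut : IsCutNode (underlyingUG E) (f (i + 1))) :
    ¬ ((underlyingUG E).deleteIncidenceSet (f (i + 1))).Reachable (f i) (f (i + 2)) := by
  intro hreach
  obtain ⟨z, hz, hzne⟩ := exists_adj_ne_of_outdeg_eq_two hv (f (i + 2))
  obtain ⟨q₀, hq₀, hq₀'⟩ := hf.exists_of_adj hz
  obtain ⟨q, hq, hqlo, hqhi⟩ := Nat.exists_modEq_mem_Ico hf.pos (i + 2) q₀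
  have hfq : f q = f (i + 1) := (hf.periodic.nat_apply_eq_of_modEq hq).trans hq₀
  have hfq' : f (q + 1) = z := (hf.periodic.nat_apply_eq_of_modEq (hq.add_right 1)).trans hq₀'
  have hfi : f (i + n) = f i := hf.periodic i
  have hpred : f i ≠ f (i + 1) := fun e => hloop _ (e ▸ hf.adj i)
  have hqi : q ≤ i + n := by
    by_contra! hlt
    obtain rfl : q = i + 1 + n := by omega
    exact hzne (hfq' ▸ (by rw [Nat.add_right_comm]; exact hf.periodic (i + 2)))
  obtain ⟨p, hqp, hpi, hp, hpreach⟩ := hf.exists_last_visit hloop hfq (i + n - q)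
    (by rw [Nat.add_sub_cancel' hqi, hfi]; exact hpred)
  rw [Nat.add_sub_cancel' hqi, hfi] at hpreach
  have hsucc : f (p + 1) ≠ f (i + 2) := by
    intro e
    have hmod := hf.modEq_of_eq hp e
    obtain ⟨d, rfl⟩ : ∃ d, p = i + 1 + d := ⟨p - (i + 1), by omega⟩
    have hd : d % n = 0 :=
      Nat.ModEq.add_left_cancel' (i + 1) (show i + 1 + d ≡ i + 1 + 0 [MOD n] from hmod)
    rw [Nat.mod_eq_of_lt (by omega)] at hd
    omega
  exact hf.not_reachable_of_isCutNode hloop hsurj hv hcut (hp ▸ hf.adj p) (hf.adj (i + 1))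
    hsucc (hpreach.trans hreach)

end

theorem apply_add_two_eq (hf : IsEulerTour E n f) (hg : IsEulerTour E m g)
    (hloop : ∀ x, ¬ E x x) (hfs : Surjective f) (hgs : Surjective g) {i j : ℕ}
    (hA : inA E (f (i + 1))) (h₀ : f i = g j) (h₁ : f (i + 1) = g (j + 1)) :
    f (i + 2) = g (j + 2) := by
  have hgadj : E (f (i + 1)) (g (j + 2)) := h₁ ▸ hg.adj (j + 1)
  rcases hA with hd | ⟨hd, hcut⟩
  · exact eq_of_outdeg_eq_one hd (hf.adj (i + 1)) hgadj
  by_contra hne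
  have hu : f i ≠ f (i + 1) := fun e => hloop _ (e ▸ hf.adj i)
  obtain ⟨y, hy, hyu⟩ := hf.exists_adj_reachable hloop hfs hu
  have hfsep := hf.not_reachable_pred_succ hloop hfs i hd hcut
  have hgsep := hg.not_reachable_pred_succ hloop hgs j (h₁ ▸ hd) (h₁ ▸ hcut)
  rw [← h₀, ← h₁] at hgsep
  rcases Set.eq_or_eq_of_ncard_eq_two hd (hf.adj (i + 1)) hgadj hne hy with rfl | rfl
  · exact hfsep hyu.symm
  · exact hgsep hyu.symm

theorem eq_shift (hf : IsEulerTour E n f) (hg : IsEulerTour E m g)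
    (hloop : ∀ x, ¬ E x x) (hfs : Surjective f) (hgs : Surjective g) (hA : ∀ v, inA E v)
    {k : ℕ} (h₀ : f k = g 0) (h₁ : f (k + 1) = g 1) (t : ℕ) : g t = f (k + t) := by
  suffices ∀ t, f (k + t) = g t ∧ f (k + t + 1) = g (t + 1) from (this t).1.symm
  intro t
  induction t with
  | zero => exact ⟨h₀, h₁⟩
  | succ t ih =>
    exact ⟨ih.2, hf.apply_add_two_eq hg hloop hfs hgs (hA _) ih.1 ih.2⟩

/-- The tree consists of the last exit from every vertex other than `f 0` in `f 0, …, f (n - 1)`;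
following last exits strictly increases the position of the last visit. -/
theorem exists_arborescence (hf : IsEulerTour E n f) (hsurj : Surjective f) :
    ∃ T, IsArborescenceTowards E (f 0) T := by
  classical
  let last : V → ℕ := fun x => Nat.findGreatest (f · = x) (n - 1)
  have last_lt (x : V) : last x < n :=
    Nat.lt_of_le_of_lt (Nat.findGreatest_le _) (Nat.sub_lt hf.pos one_pos)
  have apply_last (x : V) : f (last x) = x := by
    obtain ⟨j, -, hj, rfl⟩ := hf.exists_visit_mem_Ico hsurj 0 x
    exact Nat.findGreatest_spec (P := (f · = f j)) (m := j) (by omega) rfl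
  have le_last (t : ℕ) (ht : t < n) : t ≤ last (f t) := Nat.le_findGreatest (by omega) rfl
  refine ⟨{p | p.1 ≠ f 0 ∧ p.2 = f (last p.1 + 1)}, ?_,
    fun x hx => ⟨f (last x + 1), ⟨hx, rfl⟩, fun _ hy => hy.2⟩, fun _ hy => hy.1 rfl,
    fun x => ?_⟩
  · rintro ⟨x, y⟩ ⟨-, hy : y = f (last x + 1)⟩
    simpa only [hy, apply_last] using hf.adj (last x)
  induction hk : n - last x using Nat.strong_induction_on generalizing x with
  | _ k ih =>
  by_cases hx : x = f 0
  · rw [hx]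
  refine .head (show (x, f (last x + 1)) ∈ _ from ⟨hx, rfl⟩) ?_
  by_cases hlast : last x + 1 = n
  · rw [hlast, ← zero_add n, hf.periodic]
  · have := last_lt x
    have := le_last (last x + 1) (by omega)
    exact ih _ (by omega) _ rfl

end IsEulerTour

namespace IsArborescenceTowards

variable {V : Type*} {E : V → V → Prop} {r : V} {T T' : Set (V × V)}

theorem not_transGen_self (hT : IsArborescenceTowards E r T) (z : V) :
    ¬ Relation.TransGen (fun a b => (a, b) ∈ T) z z := by
  induction hT.2.2.2 z using Relation.ReflTransGen.head_induction_on with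
  | refl =>
    intro hcyc
    obtain ⟨w, hw, -⟩ := Relation.TransGen.head'_iff.mp hcyc
    exact hT.2.2.1 w hw
  | @head a c step _ ih =>
    intro hcyc
    obtain ⟨w, hw, hwa⟩ := Relation.TransGen.head'_iff.mp hcyc
    have ha : a ≠ r := by rintro rfl; exact hT.2.2.1 _ step
    obtain rfl : w = c := (hT.2.1 a ha).unique hw step
    exact ih (.tail' hwa step)

/-- The tree path from the successor of `x` to the root cannot return to `x`. -/
theorem reachable_of_mem (hT : IsArborescenceTowards E r T) (hloop : ∀ x, ¬ E x x) {x y : V}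
    (hxy : (x, y) ∈ T) : ((underlyingUG E).deleteIncidenceSet x).Reachable y r := by
  have hx : x ≠ r := by rintro rfl; exact hT.2.2.1 y hxy
  have hyr : Relation.ReflTransGen (fun a b => (a, b) ∈ T) y r := by
    rcases (hT.2.2.2 x).cases_head with h | ⟨w, hw, hwr⟩
    · exact absurd h hx
    · exact (hT.2.1 x hx).unique hw hxy ▸ hwr
  have hyx : ¬ Relation.ReflTransGen (fun a b => (a, b) ∈ T) y x :=
    fun h => hT.not_transGen_self x (.head' hxy h)
  clear hxy
  induction hyr using Relation.ReflTransGen.head_induction_on with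
  | refl => exact .rfl
  | @head a c step _ ih =>
    have ha : a ≠ x := fun e => hyx (e ▸ .refl)
    have hc : c ≠ x := fun e => hyx (.single (e ▸ step))
    exact (deleteIncidenceSet_adj_of_edge hloop (hT.1 _ step) ha hc).reachable.trans
      (ih fun h => hyx (.head step h))

theorem subset {n : ℕ} {f : ℕ → V} (hf : IsEulerTour E n f) (hsurj : Surjective f)
    (hloop : ∀ x, ¬ E x x) (hA : ∀ v, inA E v)
    (hT : IsArborescenceTowards E r T) (hT' : IsArborescenceTowards E r T') : T ⊆ T' := by
  rintro ⟨x, y⟩ hxy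
  have hx : x ≠ r := by rintro rfl; exact hT.2.2.1 y hxy
  obtain ⟨y', hxy', -⟩ := hT'.2.1 x hx
  suffices y = y' from this ▸ hxy'
  rcases hA x with hd | ⟨hd, hcut⟩
  · exact eq_of_outdeg_eq_one hd (hT.1 _ hxy) (hT'.1 _ hxy')
  by_contra hne
  exact hf.not_reachable_of_isCutNode hloop hsurj hd hcut (hT.1 _ hxy) (hT'.1 _ hxy') hne
    ((hT.reachable_of_mem hloop hxy).trans (hT'.reachable_of_mem hloop hxy').symm)

end IsArborescenceTowards

section Circuit

variable {V : Type*} {E : V → V → Prop}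

def cyc (c : List V) (hc : c ≠ []) (i : ℕ) : V :=
  c.get ⟨i % c.length, Nat.mod_lt _ (List.length_pos_iff.mpr hc)⟩

theorem cyc_periodic {c : List V} (hc : c ≠ []) : Periodic (cyc c hc) c.length := by
  intro i
  simp only [cyc, Nat.add_mod_right]

theorem cyclicPairs_getElem {c : List V} (hc : c ≠ []) {i : ℕ}
    (hi : i < (cyclicPairs c).length) :
    (cyclicPairs c)[i] = (cyc c hc i, cyc c hc (i + 1)) := by
  have hi' : i < c.length := by simpa [cyclicPairs] using hi
  simp [cyclicPairs, cyc, List.getElem_rotate, List.get_eq_getElem, Nat.mod_eq_of_lt hi']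

theorem mem_cyclicPairs {c : List V} (hc : c ≠ []) {a b : V} :
    (a, b) ∈ cyclicPairs c ↔ ∃ i, cyc c hc i = a ∧ cyc c hc (i + 1) = b := by
  rw [List.mem_iff_getElem]
  constructor
  · rintro ⟨i, hi, h⟩
    exact ⟨i, by simpa [cyclicPairs_getElem hc hi] using h⟩
  · rintro ⟨i, rfl, rfl⟩
    have hlen : i % c.length < (cyclicPairs c).length := by
      simpa [cyclicPairs] using Nat.mod_lt i (List.length_pos_iff.mpr hc)
    refine ⟨i % c.length, hlen, ?_⟩
    rw [cyclicPairs_getElem hc hlen, (cyc_periodic hc).map_mod_nat,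
      (cyc_periodic hc).nat_apply_eq_of_modEq ((Nat.mod_modEq i _).add_right 1)]

theorem IsEulerianCircuit.isEulerTour {c : List V} (h : IsEulerianCircuit E c) :
    IsEulerTour E c.length (cyc c h.1) where
  pos := List.length_pos_iff.mpr h.1
  periodic := cyc_periodic h.1
  adj i := (h.2.2 (_, _)).mp ((mem_cyclicPairs h.1).mpr ⟨i, rfl, rfl⟩)
  exists_of_adj hab := (mem_cyclicPairs h.1).mp ((h.2.2 (_, _)).mpr hab)
  modEq_of_eq {i j} h₀ h₁ := by
    have hn := List.length_pos_iff.mpr h.1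
    have hlen : ∀ k, k % c.length < (cyclicPairs c).length := fun k => by
      simpa [cyclicPairs] using Nat.mod_lt k hn
    refine (h.2.1.getElem_inj_iff (hi := hlen i) (hj := hlen j)).mp ?_
    have hper := cyc_periodic h.1
    rw [cyclicPairs_getElem h.1, cyclicPairs_getElem h.1, hper.map_mod_nat, hper.map_mod_nat,
      hper.nat_apply_eq_of_modEq ((Nat.mod_modEq i _).add_right 1),
      hper.nat_apply_eq_of_modEq ((Nat.mod_modEq j _).add_right 1), h₀, h₁]

theorem IsEulerianCircuit.length_eq {c c' : List V} (h : IsEulerianCircuit E c)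
    (h' : IsEulerianCircuit E c') : c.length = c'.length := by
  have hperm : (cyclicPairs c).Perm (cyclicPairs c') :=
    (List.perm_ext_iff_of_nodup h.2.1 h'.2.1).mpr fun p => by rw [h.2.2, h'.2.2]
  simpa [cyclicPairs] using hperm.length_eq

theorem eq_rotate_of_cyc {c c' : List V} (hc : c ≠ []) (hc' : c' ≠ [])
    (hlen : c'.length = c.length) {k : ℕ} (h : ∀ t, cyc c' hc' t = cyc c hc (k + t)) :
    c' = c.rotate k := by
  refine List.ext_getElem (by simp [hlen]) fun t ht _ => ?_
  have := h t
  simp only [cyc, List.get_eq_getElem, Nat.mod_eq_of_lt ht] at this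
  rw [this, List.getElem_rotate, Nat.add_comm]

end Circuit

theorem A_eq_V_unique_circuit_BEST_general {V : Type*} (E : V → V → Prop)
    (hloop : ∀ x : V, ¬ E x x)
    (heul : ∃ c : List V, IsEulerianCircuit E c)
    (hA : ∀ v : V, inA E v) :
    (∃ c : List V, IsEulerianCircuit E c ∧
        ∀ c' : List V, IsEulerianCircuit E c' → ∃ k : ℕ, c' = c.rotate k) ∧
    (∀ r : V, ∃! T : Set (V × V), IsArborescenceTowards E r T) ∧
    ∀ v : V, Nat.factorial (outdeg E v - 1) = 1 := by
  have hsurj {c : List V} (hc : IsEulerianCircuit E c) : Surjective (cyc c hc.1) :=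
    hc.isEulerTour.surjective fun v => (hA v).exists_adj
  obtain ⟨c, hc⟩ := heul
  have hf := hc.isEulerTour
  refine ⟨⟨c, hc, fun c' hc' => ?_⟩, fun r => ?_, fun v => (hA v).factorial_outdeg_sub_one⟩
  · obtain ⟨k, h₀, h₁⟩ := hf.exists_of_adj (hc'.isEulerTour.adj 0)
    exact ⟨k, eq_rotate_of_cyc hc.1 hc'.1 (hc'.length_eq hc)
      (hf.eq_shift hc'.isEulerTour hloop (hsurj hc) (hsurj hc') hA h₀ h₁)⟩
  · obtain ⟨k, rfl⟩ := hsurj hc r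
    obtain ⟨T, hT⟩ := (hf.shift k).exists_arborescence (hf.surjective_shift (hsurj hc) k)
    rw [zero_add] at hT
    exact ⟨T, hT, fun T' hT' => (hT'.subset hf (hsurj hc) hloop hA hT).antisymm
      (hT.subset hf (hsurj hc) hloop hA hT')⟩

/-- If every node is in `A(G)`, then `G` has exactly one Eulerian circuit up to cyclic
rotation; in particular (via the BEST theorem formula), `t(G) = 1` and
`(d(v) - 1)! = 1` for every node `v`. -/
theorem A_eq_V_unique_circuit_BEST {V : Type*} [Fintype V] (E : V → V → Prop)
    (hloop : ∀ x : V, ¬ E x x) (hconn : (underlyingUG E).Connected)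
    (heul : ∃ c : List V, IsEulerianCircuit E c)
    (hA : ∀ v : V, inA E v) :
    (∃ c : List V, IsEulerianCircuit E c ∧
        ∀ c' : List V, IsEulerianCircuit E c' → ∃ k : ℕ, c' = c.rotate k) ∧
    (∀ r : V, ∃! T : Set (V × V), IsArborescenceTowards E r T) ∧
    ∀ v : V, Nat.factorial (outdeg E v - 1) = 1 :=
  A_eq_V_unique_circuit_BEST_general E hloop heul hA
end

section
/- Let G be a directed Eulerian graph without parallel edges or self-loops, and suppose node v with d(v) = 2 is a cut node of U(G) with U(G) \ v having components K1 and K2, and (u,v,w) appears in some Eulerian circuit of G. Then u and w lie in different components of U(G) \ v. -/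
/-!
Rotate the Eulerian circuit so that it starts with the edge `(v, w)`; it then ends with `u`.
Since `v` has out-degree 2 it occurs exactly twice, so the circuit reads `v A v B` with `w` the
first vertex of `A`, `u` the last vertex of `B`, and `v ∉ A, B`. Each of `A`, `B` is a walk in
`U(G) \ v`, hence lies in a single component, and by connectivity every vertex other than `v`
lies on the circuit. So if `u` and `w` were in the same component, `U(G) \ v` would be
connected, contradicting that `v` is a cut node.
-/

theorem List.exists_eq_append_cons_of_count_eq_one {α : Type*} [DecidableEq α] {l : List α}
    {a : α} (h : l.count a = 1) : ∃ s t, l = s ++ a :: t ∧ a ∉ s ∧ a ∉ t := by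
  obtain ⟨s, t, rfl⟩ := List.append_of_mem (List.count_pos_iff.mp (by rw [h]; exact Nat.one_pos))
  rw [List.count_append, List.count_cons_self] at h
  exact ⟨s, t, rfl, List.count_eq_zero.mp (by omega), List.count_eq_zero.mp (by omega)⟩

theorem SimpleGraph.reachable_of_isChain {α : Type*} {G : SimpleGraph α} {l : List α}
    (hl : l.IsChain G.Reachable) {x y : α} (hx : x ∈ l) (hy : y ∈ l) : G.Reachable x y := by
  have hne : l ≠ [] := List.ne_nil_of_mem hx
  have h := List.IsChain.induction (G.Reachable (l.head hne)) l hl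
    (fun _ _ h₁ h₂ => h₂.trans h₁) fun _ => .rfl
  exact (h x hx).symm.trans (h y hy)

section CyclicPairs

variable {V : Type*}

theorem cyclicPairs_rotate (l : List V) (k : ℕ) :
    cyclicPairs (l.rotate k) = (cyclicPairs l).rotate k := by
  apply List.ext_getElem
  · simp [cyclicPairs]
  intro i _ _
  have hidx : (i + (k + 1)) % l.length = ((i + k) % l.length + 1) % l.length := by
    rw [Nat.mod_add_mod]; ring_nf
  simp only [cyclicPairs, List.getElem_rotate, List.getElem_zip, List.rotate_rotate,
    List.length_rotate, List.length_zip, min_self, hidx]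

theorem cyclicPairs_cons_cons (x y : V) (l : List V) :
    cyclicPairs (x :: y :: l) = (x, y) :: (y :: l).zip (l ++ [x]) := by
  simp [cyclicPairs]

theorem getElem_cyclicPairs (l : List V) (i : ℕ) (h : i < l.length) :
    (cyclicPairs l)[i]'(by simpa [cyclicPairs]) =
      (l[i], l[(i + 1) % l.length]'(Nat.mod_lt _ (Nat.zero_lt_of_lt h))) := by
  simp only [cyclicPairs, List.getElem_zip, List.getElem_rotate]

theorem map_fst_cyclicPairs (l : List V) : (cyclicPairs l).map Prod.fst = l :=
  List.map_fst_zip (by simp)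

theorem mem_of_mem_cyclicPairs_s18 {l : List V} {x y : V} (h : (x, y) ∈ cyclicPairs l) :
    x ∈ l ∧ y ∈ l := by
  obtain ⟨hx, hy⟩ := List.of_mem_zip h
  exact ⟨hx, List.mem_rotate.mp hy⟩

theorem Appears.exists_rotate_eq_cons {u v w : V} {c : List V} (h : Appears [u, v, w] c) :
    ∃ k r, c.rotate k = v :: r ∧ r.head? = some w ∧ r.getLast? = some u := by
  obtain ⟨k, s, t, hst⟩ := h
  have hpairs : cyclicPairs (c.rotate (k + s.length)) = (u, v) :: (v, w) :: (t ++ s) := by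
    rw [← List.rotate_rotate, cyclicPairs_rotate, ← hst, List.append_assoc,
      List.rotate_append_length_eq]
    simp
  rcases hc : c.rotate (k + s.length) with _ | ⟨x, _ | ⟨y, q⟩⟩
  · simp [hc, cyclicPairs] at hpairs
  · simp [hc, cyclicPairs] at hpairs
  rw [hc, cyclicPairs_cons_cons] at hpairs
  obtain ⟨⟨rfl, rfl⟩, hzip⟩ := List.cons_eq_cons.mp hpairs
  refine ⟨k + s.length + 1, q ++ [u], ?_, ?_, by simp⟩
  · rw [← List.rotate_rotate, hc, List.rotate_cons_succ, List.rotate_zero]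
    simp
  · cases q <;> simp_all

end CyclicPairs

section Eulerian

variable {V : Type*} {E : V → V → Prop} {d : List V}

theorem IsEulerianCircuit.rotate (hd : IsEulerianCircuit E d) (k : ℕ) :
    IsEulerianCircuit E (d.rotate k) := by
  obtain ⟨hne, hnd, hmem⟩ := hd
  refine ⟨by simpa using hne, ?_, fun p => ?_⟩
  · rw [cyclicPairs_rotate]; exact List.nodup_rotate.mpr hnd
  · rw [cyclicPairs_rotate, List.mem_rotate]; exact hmem p

theorem IsEulerianCircuit.isChain (hd : IsEulerianCircuit E d) : d.IsChain E := by
  refine List.isChain_iff_getElem.mpr fun i hi => ?_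
  have hpair := getElem_cyclicPairs d i (by omega)
  simp only [Nat.mod_eq_of_lt hi] at hpair
  exact (hd.2.2 _).mp (hpair ▸ List.getElem_mem _)

theorem IsEulerianCircuit.mem_of_adj (hd : IsEulerianCircuit E d) {x y : V}
    (h : (underlyingUG E).Adj x y) : x ∈ d := by
  rcases h.2 with hxy | hyx
  · exact (mem_of_mem_cyclicPairs_s18 ((hd.2.2 (x, y)).mpr hxy)).1
  · exact (mem_of_mem_cyclicPairs_s18 ((hd.2.2 (y, x)).mpr hyx)).2

theorem IsEulerianCircuit.mem_of_ne (hd : IsEulerianCircuit E d)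
    (hconn : (underlyingUG E).Connected) {x y : V} (hxy : x ≠ y) : x ∈ d := by
  obtain ⟨p⟩ := hconn.preconnected x y
  cases p with
  | nil => exact absurd rfl hxy
  | cons hadj _ => exact hd.mem_of_adj hadj

theorem IsEulerianCircuit.count_eq_outdeg [DecidableEq V] (hd : IsEulerianCircuit E d) (v : V) :
    d.count v = outdeg E v := by
  have himage : Prod.mk v '' {x | E v x} = ↑((cyclicPairs d).filter (·.1 = v)).toFinset := by
    ext ⟨a, b⟩
    simp only [Set.mem_image, Set.mem_ofPred_eq, Prod.mk.injEq, List.coe_toFinset,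
      List.mem_filter, decide_eq_true_eq, hd.2.2]
    constructor
    · rintro ⟨x, hx, rfl, rfl⟩; exact ⟨hx, rfl⟩
    · rintro ⟨hab, rfl⟩; exact ⟨b, hab, rfl, rfl⟩
  rw [outdeg, ← Set.ncard_image_of_injective _ (Prod.mk_right_injective v), himage,
    Set.ncard_coe_finset, List.toFinset_card_of_nodup (hd.2.1.filter _),
    ← List.countP_eq_length_filter]
  conv_lhs => rw [← map_fst_cyclicPairs d]
  rw [List.count_eq_countP, List.countP_map]
  rfl

end Eulerian

section DelNode

variable {V : Type*} {E : V → V → Prop} {v : V}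

theorem delNode_reachable_of_rel {a b : V} (hab : E a b) (ha : a ≠ v) (hb : b ≠ v) :
    (delNode E v).Reachable ⟨a, ha⟩ ⟨b, hb⟩ := by
  by_cases h : a = b
  · subst h; rfl
  · exact SimpleGraph.Adj.reachable (G := delNode E v) ⟨h, Or.inl hab⟩

theorem delNode_reachable_of_isChain {l : List V} (hl : l.IsChain E) (hv : v ∉ l) {x y : V}
    (hx : x ∈ l) (hy : y ∈ l) :
    (delNode E v).Reachable ⟨x, ne_of_mem_of_not_mem hx hv⟩ ⟨y, ne_of_mem_of_not_mem hy hv⟩ :=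
  SimpleGraph.reachable_of_isChain
    (List.isChain_pmap_of_isChain (fun _ _ ha hb hab => delNode_reachable_of_rel hab ha hb) hl
      fun _ ha => ne_of_mem_of_not_mem ha hv)
    (List.mem_pmap_of_mem hx) (List.mem_pmap_of_mem hy)

theorem IsEulerianCircuit.delNode_connected_of_reachable {A B : List V}
    (hd : IsEulerianCircuit E (v :: (A ++ v :: B))) (hconn : (underlyingUG E).Connected)
    (hvA : v ∉ A) (hvB : v ∉ B) {a b : V} (ha : a ∈ A) (hb : b ∈ B)
    (hab : (delNode E v).Reachable ⟨a, ne_of_mem_of_not_mem ha hvA⟩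
      ⟨b, ne_of_mem_of_not_mem hb hvB⟩) :
    (delNode E v).Connected := by
  have hchain := hd.isChain
  have hA : A.IsChain E := hchain.infix ⟨[v], v :: B, by simp⟩
  have hB : B.IsChain E := hchain.infix ⟨v :: A ++ [v], [], by simp⟩
  refine (SimpleGraph.connected_iff_exists_forall_reachable _).mpr
    ⟨⟨a, ne_of_mem_of_not_mem ha hvA⟩, fun ⟨x, hx⟩ => ?_⟩
  have hxd : x ∈ A ∨ x ∈ B := by simpa [show x ≠ v from hx] using hd.mem_of_ne hconn hx
  rcases hxd with hxA | hxB
  · exact delNode_reachable_of_isChain hA hvA ha hxA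
  · exact hab.trans (delNode_reachable_of_isChain hB hvB hb hxB)

end DelNode

theorem safe_walk_crosses_components_general {V : Type*} (E : V → V → Prop)
    (hconn : (underlyingUG E).Connected)
    (v u w : V) (hdout : outdeg E v = 2)
    (hcut : IsCutNode (underlyingUG E) v)
    (hu : u ≠ v) (hw : w ≠ v)
    (happ : ∃ c : List V, IsEulerianCircuit E c ∧ Appears [u, v, w] c) :
    (delNode E v).connectedComponentMk ⟨u, hu⟩ ≠
      (delNode E v).connectedComponentMk ⟨w, hw⟩ := by
  classical
  intro hcomp
  obtain ⟨c, hc, happ⟩ := happ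
  obtain ⟨k, r, hrot, hhead, hlast⟩ := happ.exists_rotate_eq_cons
  have hd := hc.rotate k
  have hcount : r.count v = 1 := by
    have h := hd.count_eq_outdeg v
    rw [hrot, List.count_cons_self, hdout] at h
    omega
  obtain ⟨A, B, rfl, hvA, hvB⟩ := List.exists_eq_append_cons_of_count_eq_one hcount
  have hwA : w ∈ A := by
    cases A with
    | nil => exact absurd (by simpa using hhead) hw.symm
    | cons a A => exact List.mem_of_head? (by simpa using hhead)
  have huB : u ∈ B := by
    have h : (v :: B).getLast? = some u := by simpa [List.getLast?_append] using hlast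
    exact (List.mem_cons.mp (List.mem_of_getLast? h)).resolve_left hu
  rw [hrot] at hd
  exact hcut (hd.delNode_connected_of_reachable hconn hvA hvB hwA huB
    (SimpleGraph.ConnectedComponent.eq.mp hcomp).symm)

/-- If `d(v) = 2`, `v` is a cut node of `U(G)`, and `(u,v,w)` appears in some Eulerian
circuit, then `u` and `w` lie in different connected components of `U(G) \ v`. -/
theorem safe_walk_crosses_components {V : Type*} [Fintype V] (E : V → V → Prop)
    (hloop : ∀ x : V, ¬ E x x) (hconn : (underlyingUG E).Connected)
    (v u w : V) (hdout : outdeg E v = 2) (hdin : indeg E v = 2)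
    (hcut : IsCutNode (underlyingUG E) v)
    (huv : E u v) (hvw : E v w) (hu : u ≠ v) (hw : w ≠ v)
    (happ : ∃ c : List V, IsEulerianCircuit E c ∧ Appears [u, v, w] c) :
    (delNode E v).connectedComponentMk ⟨u, hu⟩ ≠
      (delNode E v).connectedComponentMk ⟨w, hw⟩ :=
  safe_walk_crosses_components_general E hconn v u w hdout hcut hu hw happ
end
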